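/- Let L be the discrete Neumann Laplacian on ℝⁿ (n ≥ 2) and define L⁻¹ on the orthogonal complement of constants by L⁻¹ f = Σ_{i≥2} (1/λ^i)⟨f, ψ^i⟩ ψ^i, where λ^i = −4n² sin²((i−1)π/(2n)) and ψ^i is the orthonormal DCT basis. Then the operator norm of G ∘ L⁻¹ (from ℝⁿ with Euclidean norm to ℝ^{n−1} with Euclidean norm) is at most 1/4, provided n > 1. -/

import Mathlib

/-- Discrete Neumann Laplacian on `ℝⁿ` with mesh `Δ = 1/n`:
`(L u)_1 = (u_2 - u_1)/Δ²`, `(L u)_j = (u_{j-1} - 2u_j + u_{j+1})/Δ²` in the interior,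
`(L u)_n = (u_{n-1} - u_n)/Δ²`. (0-based indexing.) -/
def dLap (n : ℕ) (u : Fin n → ℝ) : Fin n → ℝ := fun j =>
  (n : ℝ) ^ 2 *
    ((if h : (j : ℕ) + 1 < n then u ⟨(j : ℕ) + 1, h⟩ else u j)
      - 2 * u j
      + (if 0 < (j : ℕ) then u ⟨(j : ℕ) - 1, by omega⟩ else u j))

/-- Discrete divergence `D : ℝ^{n-1} → ℝⁿ` with zero-flux boundary:
`(D m)_1 = m_1/Δ`, `(D m)_j = (m_j - m_{j-1})/Δ`, `(D m)_n = -m_{n-1}/Δ`. -/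
def dDiv (n : ℕ) (m : Fin (n - 1) → ℝ) : Fin n → ℝ := fun j =>
  (n : ℝ) *
    ((if h : (j : ℕ) < n - 1 then m ⟨(j : ℕ), h⟩ else 0)
      - (if h : 0 < (j : ℕ) then m ⟨(j : ℕ) - 1, by omega⟩ else 0))

/-- Discrete gradient `G : ℝⁿ → ℝ^{n-1}`: `(G φ)_j = (φ_{j+1} - φ_j)/Δ`. -/
def dGrad (n : ℕ) (φ : Fin n → ℝ) : Fin (n - 1) → ℝ := fun j =>
  (n : ℝ) * (φ ⟨(j : ℕ) + 1, by omega⟩ - φ ⟨(j : ℕ), by omega⟩)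

/-- Eigenvalues of the discrete Neumann Laplacian (1-based `i` given as `i ∈ Fin n`,
so `λ^{i+1} = -4 n² sin²(i π / (2n))`). -/
noncomputable def dLam (n : ℕ) (i : Fin n) : ℝ :=
  -4 * (n : ℝ) ^ 2 * Real.sin ((i : ℝ) * Real.pi / (2 * n)) ^ 2

/-- Orthonormal DCT-II eigenbasis of the discrete Neumann Laplacian. -/
noncomputable def dPsi (n : ℕ) (i j : Fin n) : ℝ :=
  Real.sqrt ((1 + if (i : ℕ) = 0 then (1 : ℝ) else 0) / n) *
    Real.cos (((j : ℝ) + 1 / 2) * ((i : ℝ) * Real.pi / n))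

/-- Pseudoinverse of the discrete Neumann Laplacian on the orthogonal complement of
constants, defined spectrally. -/
noncomputable def dLapInv (n : ℕ) (f : Fin n → ℝ) : Fin n → ℝ := fun j =>
  ∑ i ∈ Finset.univ.filter (fun i : Fin n => (i : ℕ) ≠ 0),
    (1 / dLam n i) * (∑ k, f k * dPsi n i k) * dPsi n i j

/-!
The discrete gradient and divergence satisfy `dDiv ∘ dGrad = dLap` and `dDiv = -dGradᵀ`, so
`‖G φ‖² = -⟨L φ, φ⟩`. The DCT vectors `ψ_i` are eigenvectors of `L` and, with the normalisation of
`dPsi`, the nonconstant ones are orthogonal with `‖ψ_i‖² = 1/2`. Writing `c_i = ⟨f, ψ_i⟩`, this gives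
`‖G L⁻¹ f‖² = ∑ c_i² / (2 |λ_i|) ≤ ∑ c_i² / 8`, because Jordan's inequality `sin x ≥ 2x/π` yields
`|λ_i| = 4 n² sin²(iπ/2n) ≥ 4 i² ≥ 4`; and Bessel's inequality gives `∑ c_i² ≤ ‖f‖² / 2`.
-/

open Finset Real

section Orthogonal

variable {ι κ : Type*} [DecidableEq ι] [Fintype κ] {s : Finset ι} {e : ι → κ → ℝ} {r : ℝ}

theorem sum_smul_dotProduct_sum_smul
    (he : ∀ i ∈ s, ∀ j ∈ s, e i ⬝ᵥ e j = if i = j then r else 0) (a b : ι → ℝ) :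
    (∑ i ∈ s, a i • e i) ⬝ᵥ (∑ j ∈ s, b j • e j) = r * ∑ i ∈ s, a i * b i := by
  simp_rw [sum_dotProduct, dotProduct_sum, smul_dotProduct, dotProduct_smul, smul_eq_mul, mul_sum]
  refine sum_congr rfl fun i hi => ?_
  rw [sum_eq_single_of_mem i hi fun j hj hji => by rw [he i hi j hj, if_neg hji.symm]; ring,
    he i hi i hi, if_pos rfl]
  ring

theorem sum_sq_dotProduct_le (he : ∀ i ∈ s, ∀ j ∈ s, e i ⬝ᵥ e j = if i = j then r else 0)
    (hr : 0 < r) (f : κ → ℝ) : ∑ i ∈ s, (f ⬝ᵥ e i) ^ 2 ≤ r * (f ⬝ᵥ f) := by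
  set g := ∑ i ∈ s, (f ⬝ᵥ e i) • e i
  have hfg : f ⬝ᵥ g = ∑ i ∈ s, (f ⬝ᵥ e i) ^ 2 := by
    simp_rw [g, dotProduct_sum, dotProduct_smul, smul_eq_mul, sq]
  have hgg : g ⬝ᵥ g = r * ∑ i ∈ s, (f ⬝ᵥ e i) ^ 2 := by
    simp_rw [g, sum_smul_dotProduct_sum_smul he, sq]
  have := dotProduct_self_star_nonneg (r • f - g)
  simp only [star_trivial, sub_dotProduct, dotProduct_sub, smul_dotProduct, dotProduct_smul,
    smul_eq_mul, dotProduct_comm g f, hfg, hgg] at this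
  nlinarith

end Orthogonal

theorem dDiv_dGrad (n : ℕ) (φ : Fin n → ℝ) : dDiv n (dGrad n φ) = dLap n φ := by
  funext ⟨j, hj⟩
  set v : ℕ → ℝ := fun k => if h : k < n then φ ⟨k, h⟩ else 0
  have hφ : ∀ k (h : k < n), φ ⟨k, h⟩ = v k := fun k h => by simp [v, h]
  unfold dDiv dGrad dLap
  split_ifs <;> simp only [hφ] <;> try omega
  all_goals (try rw [Nat.sub_add_cancel (by assumption : 1 ≤ j)]); ring

theorem dDiv_dotProduct (n : ℕ) (m : Fin (n - 1) → ℝ) (φ : Fin n → ℝ) :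
    dDiv n m ⬝ᵥ φ = -(m ⬝ᵥ dGrad n φ) := by
  obtain _ | k := n
  · simp [dotProduct]
  have hA : ∑ j : Fin (k + 1), (if h : (j : ℕ) < k + 1 - 1 then m ⟨j, h⟩ else 0) * φ j
      = ∑ j : Fin k, m j * φ j.castSucc := by
    simp [Fin.sum_univ_castSucc]
  have hB : ∑ j : Fin (k + 1), (if h : 0 < (j : ℕ) then m ⟨j - 1, by omega⟩ else 0) * φ j
      = ∑ j : Fin k, m j * φ j.succ := by
    simp [Fin.sum_univ_succ]
  calc dDiv (k + 1) m ⬝ᵥ φ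
      = (k + 1 : ℕ) * (∑ j : Fin (k + 1), (if h : (j : ℕ) < k + 1 - 1 then m ⟨j, h⟩ else 0) * φ j
          - ∑ j : Fin (k + 1), (if h : 0 < (j : ℕ) then m ⟨j - 1, by omega⟩ else 0) * φ j) := by
        simp only [dotProduct, dDiv, mul_sum, ← sum_sub_distrib]
        exact sum_congr rfl fun j _ => by ring
    _ = -(m ⬝ᵥ dGrad (k + 1) φ) := by
        rw [hA, hB]
        simp only [dotProduct, dGrad, mul_sum, ← sum_sub_distrib, ← sum_neg_distrib]
        exact sum_congr rfl fun ⟨j, _⟩ _ => by simp only [Fin.succ_mk, Fin.castSucc_mk]; ring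

theorem dGrad_dotProduct_self (n : ℕ) (φ : Fin n → ℝ) :
    dGrad n φ ⬝ᵥ dGrad n φ = -(dLap n φ ⬝ᵥ φ) := by
  rw [← dDiv_dGrad, dDiv_dotProduct, neg_neg]

def dLapₗ (n : ℕ) : (Fin n → ℝ) →ₗ[ℝ] Fin n → ℝ where
  toFun := dLap n
  map_add' u v := by
    funext j
    simp only [dLap, Pi.add_apply]
    split_ifs <;> ring
  map_smul' a u := by
    funext j
    simp only [dLap, Pi.smul_apply, smul_eq_mul, RingHom.id_apply]
    split_ifs <;> ring

theorem two_mul_sin_half_mul_sum_range_cos (θ : ℝ) (N : ℕ) :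
    2 * sin (θ / 2) * ∑ k ∈ range N, cos ((k + 1 / 2) * θ) = sin (N * θ) := by
  induction N with
  | zero => simp
  | succ N ih =>
    have h := sin_sub_sin ((N + 1) * θ) (N * θ)
    rw [show ((N + 1) * θ - N * θ) / 2 = θ / 2 by ring,
      show ((N + 1) * θ + N * θ) / 2 = (N + 1 / 2) * θ by ring] at h
    rw [sum_range_succ, mul_add, ih]
    push_cast
    linarith

theorem sum_range_cos_int_mul_pi_div_eq_zero {n : ℕ} {m : ℤ} (hm₀ : m ≠ 0) (hm : |m| < 2 * n) :
    ∑ k ∈ range n, cos ((k + 1 / 2) * (m * π / n)) = 0 := by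
  have hn : (n : ℝ) ≠ 0 := by
    have : 0 < |m| := abs_pos.2 hm₀
    exact_mod_cast (show n ≠ 0 by omega)
  have hsin : sin (m * π / n / 2) ≠ 0 := by
    rw [Ne, sin_eq_zero_iff]
    rintro ⟨k, hk⟩
    have hmk : m = 2 * n * k := by
      have : (m : ℝ) = 2 * n * k := by
        field_simp at hk
        linarith [pi_pos]
      exact_mod_cast this
    rw [abs_lt] at hm
    rcases lt_trichotomy k 0 with hk | rfl | hk
    · nlinarith
    · exact hm₀ (by simpa using hmk)
    · nlinarith
  have h := two_mul_sin_half_mul_sum_range_cos (m * π / n) n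
  rw [show (n : ℝ) * (m * π / n) = m * π by field_simp, sin_int_mul_pi] at h
  exact (mul_eq_zero.1 h).resolve_left (mul_ne_zero two_ne_zero hsin)

theorem sum_range_cos_mul_cos {n i i' : ℕ} (hi₀ : i ≠ 0) (hi : i < n) (hi' : i' < n) :
    ∑ k ∈ range n, cos ((k + 1 / 2) * (i * π / n)) * cos ((k + 1 / 2) * (i' * π / n))
      = if i = i' then (n : ℝ) / 2 else 0 := by
  have hadd : ∑ k ∈ range n, cos ((k + 1 / 2) * (((i + i' : ℤ) : ℝ) * π / n)) = 0 :=
    sum_range_cos_int_mul_pi_div_eq_zero (by omega) (abs_lt.2 ⟨by omega, by omega⟩)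
  calc ∑ k ∈ range n, cos ((k + 1 / 2) * (i * π / n)) * cos ((k + 1 / 2) * (i' * π / n))
      = (∑ k ∈ range n, cos ((k + 1 / 2) * (((i + i' : ℤ) : ℝ) * π / n))
          + ∑ k ∈ range n, cos ((k + 1 / 2) * (((i - i' : ℤ) : ℝ) * π / n))) / 2 := by
        rw [← sum_add_distrib, sum_div]
        refine sum_congr rfl fun k _ => ?_
        rw [show ∀ a b : ℝ, cos a * cos b = (cos (a + b) + cos (a - b)) / 2 by
          intro a b; rw [cos_add, cos_sub]; ring]
        push_cast
        ring_nf
    _ = if i = i' then (n : ℝ) / 2 else 0 := by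
        rw [hadd, zero_add]
        split_ifs with h
        · simp [h]
        · rw [sum_range_cos_int_mul_pi_div_eq_zero (by omega) (abs_lt.2 ⟨by omega, by omega⟩),
            zero_div]

theorem cos_add_sub_two_mul_cos_add_cos_sub (x α : ℝ) :
    cos (x + α) - 2 * cos x + cos (x - α) = -(4 * sin (α / 2) ^ 2) * cos x := by
  have h : cos α = 1 - 2 * sin (α / 2) ^ 2 := by
    have := cos_two_mul (α / 2)
    rw [mul_div_cancel₀ α two_ne_zero, cos_sq'] at this
    linarith
  rw [cos_add, cos_sub, h]
  ring

theorem dPsi_of_ne_zero {n : ℕ} {i : Fin n} (hi : (i : ℕ) ≠ 0) (j : Fin n) :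
    dPsi n i j = (√n)⁻¹ * cos ((j + 1 / 2) * (i * π / n)) := by
  simp [dPsi, hi, sqrt_inv]

theorem dPsi_dotProduct_dPsi {n : ℕ} {i i' : Fin n} (hi : (i : ℕ) ≠ 0) (hi' : (i' : ℕ) ≠ 0) :
    dPsi n i ⬝ᵥ dPsi n i' = if i = i' then 1 / 2 else 0 := by
  have hn : (0 : ℝ) < n := by exact_mod_cast i.pos
  calc dPsi n i ⬝ᵥ dPsi n i'
      = (√n)⁻¹ ^ 2 * ∑ k ∈ range n, cos ((k + 1 / 2) * (i * π / n))
          * cos ((k + 1 / 2) * (i' * π / n)) := by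
        rw [← Fin.sum_univ_eq_sum_range, mul_sum]
        simp only [dotProduct, dPsi_of_ne_zero hi, dPsi_of_ne_zero hi']
        exact Finset.sum_congr rfl fun k _ => by ring
    _ = if i = i' then 1 / 2 else 0 := by
        simp_rw [sum_range_cos_mul_cos hi i.is_lt i'.is_lt, Fin.val_inj, inv_pow, sq_sqrt hn.le]
        split_ifs
        · field_simp
        · rw [mul_zero]

theorem dPsi_orthogonal (n : ℕ) :
    ∀ i ∈ ({i | i.val ≠ 0} : Finset (Fin n)), ∀ i' ∈ ({i | i.val ≠ 0} : Finset (Fin n)),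
      dPsi n i ⬝ᵥ dPsi n i' = if i = i' then 1 / 2 else 0 :=
  fun _ hi _ hi' => dPsi_dotProduct_dPsi (mem_filter.1 hi).2 (mem_filter.1 hi').2

/-- Reflecting `v` about `-1/2` and `n - 1/2` turns the Neumann boundary rows of `dLap` into the
interior stencil. -/
theorem dLap_apply_of_reflect {n : ℕ} (v : ℝ → ℝ) (h₀ : v (-1) = v 0) (hₙ : v n = v (n - 1))
    (j : Fin n) : dLap n (fun k => v k) j = n ^ 2 * (v (j + 1) - 2 * v j + v (j - 1)) := by
  obtain ⟨j, hj⟩ := j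
  simp only [dLap]
  congr 2
  · split_ifs with h
    · push_cast; rfl
    · have : (j : ℝ) + 1 = n := by exact_mod_cast (by omega : j + 1 = n)
      rw [this, hₙ, ← this, add_sub_cancel_right]
  · split_ifs with h
    · simp [Nat.cast_sub (by omega : 1 ≤ j)]
    · have : (j : ℝ) = 0 := by exact_mod_cast (by omega : j = 0)
      simp [this, h₀]

theorem dLap_dPsi (n : ℕ) (i : Fin n) : dLap n (dPsi n i) = dLam n i • dPsi n i := by
  have hn : (n : ℝ) ≠ 0 := by exact_mod_cast i.pos.ne'
  set c := √((1 + if (i : ℕ) = 0 then (1 : ℝ) else 0) / n)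
  set α := (i : ℝ) * π / n
  have hα : (n : ℝ) * α = i * π := by simp only [α]; field_simp
  have hreflect : c * cos ((n + 1 / 2) * α) = c * cos ((n - 1 + 1 / 2) * α) := by
    rw [show (n + 1 / 2) * α = α / 2 + i * π by rw [← hα]; ring,
      show (n - 1 + 1 / 2) * α = i * π - α / 2 by rw [← hα]; ring,
      cos_add_nat_mul_pi, cos_nat_mul_pi_sub]
  funext j
  have h := dLap_apply_of_reflect (fun x => c * cos ((x + 1 / 2) * α))
    (by rw [show ((-1 : ℝ) + 1 / 2) * α = -((0 + 1 / 2) * α) by ring, cos_neg]) hreflect j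
  change dLap n (fun k : Fin n => c * cos ((k + 1 / 2) * α)) j = _
  rw [h]
  have := cos_add_sub_two_mul_cos_add_cos_sub ((j + 1 / 2) * α) α
  simp only [Pi.smul_apply, smul_eq_mul, dLam, dPsi]
  rw [show ((j : ℝ) + 1 + 1 / 2) * α = (j + 1 / 2) * α + α by ring,
    show ((j : ℝ) - 1 + 1 / 2) * α = (j + 1 / 2) * α - α by ring,
    show (i : ℝ) * π / (2 * n) = α / 2 by ring]
  linear_combination (n : ℝ) ^ 2 * c * this

theorem four_le_neg_dLam {n : ℕ} {i : Fin n} (hi : (i : ℕ) ≠ 0) : 4 ≤ -dLam n i := by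
  have hn : (0 : ℝ) < n := by exact_mod_cast i.pos
  have hi₁ : (1 : ℝ) ≤ i := by exact_mod_cast Nat.one_le_iff_ne_zero.2 hi
  have hin : (i : ℝ) ≤ n := by exact_mod_cast i.is_lt.le
  have hsin : (i : ℝ) / n ≤ sin (i * π / (2 * n)) := by
    have := mul_le_sin (x := i * π / (2 * n)) (by positivity) (by
      rw [div_le_div_iff₀ (by positivity) two_pos]; nlinarith [pi_pos])
    convert this using 1
    field_simp
  have h1 : 1 ≤ n * sin (i * π / (2 * n)) := by
    rw [div_le_iff₀ hn] at hsin; linarith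
  unfold dLam
  nlinarith

theorem dLapInv_eq_sum (n : ℕ) (f : Fin n → ℝ) :
    dLapInv n f = ∑ i : Fin n with i.val ≠ 0, ((f ⬝ᵥ dPsi n i) / dLam n i) • dPsi n i := by
  funext j
  simp only [dLapInv, Finset.sum_apply, Pi.smul_apply, smul_eq_mul, dotProduct]
  exact sum_congr rfl fun i _ => by ring

theorem dLap_dLapInv (n : ℕ) (f : Fin n → ℝ) :
    dLap n (dLapInv n f) = ∑ i : Fin n with i.val ≠ 0, (f ⬝ᵥ dPsi n i) • dPsi n i := by
  rw [dLapInv_eq_sum]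
  change dLapₗ n _ = _
  rw [map_sum]
  refine sum_congr rfl fun i hi => ?_
  have hlam : dLam n i ≠ 0 := by
    have := four_le_neg_dLam (mem_filter.1 hi).2
    linarith
  rw [map_smul]
  change _ • dLap n (dPsi n i) = _
  rw [dLap_dPsi, smul_smul, div_mul_cancel₀ _ hlam]

theorem dGrad_dLapInv_dotProduct_self_le (n : ℕ) (f : Fin n → ℝ) :
    dGrad n (dLapInv n f) ⬝ᵥ dGrad n (dLapInv n f)
      ≤ 1 / 8 * ∑ i : Fin n with i.val ≠ 0, (f ⬝ᵥ dPsi n i) ^ 2 := by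
  rw [dGrad_dotProduct_self, dLap_dLapInv, dLapInv_eq_sum,
    sum_smul_dotProduct_sum_smul (dPsi_orthogonal n), mul_sum, mul_sum, ← sum_neg_distrib]
  refine sum_le_sum fun i hi => ?_
  have hlam := four_le_neg_dLam (mem_filter.1 hi).2
  set c := f ⬝ᵥ dPsi n i
  calc -(1 / 2 * (c * (c / dLam n i))) = 1 / 2 * (c ^ 2 / -dLam n i) := by rw [div_neg]; ring
    _ ≤ 1 / 2 * (c ^ 2 / 4) := by gcongr
    _ = 1 / 8 * c ^ 2 := by ring

theorem stmt8_general (n : ℕ) (f : Fin n → ℝ) :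
    Real.sqrt (∑ j, (dGrad n (dLapInv n f) j) ^ 2) ≤
      (1 / 4) * Real.sqrt (∑ j, (f j) ^ 2) := by
  have hbessel := sum_sq_dotProduct_le (dPsi_orthogonal n) one_half_pos f
  have henergy := dGrad_dLapInv_dotProduct_self_le n f
  simp only [dotProduct, ← sq] at hbessel henergy
  rw [show (1 / 4 : ℝ) = √((1 / 4) ^ 2) by rw [sqrt_sq (by norm_num)], ← sqrt_mul (by norm_num)]
  exact sqrt_le_sqrt (by linarith)

/-- Operator norm bound `‖G ∘ L⁻¹‖ ≤ 1/4` for `n > 1`. -/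
theorem stmt8 (n : ℕ) (hn : 1 < n) (f : Fin n → ℝ) :
    Real.sqrt (∑ j, (dGrad n (dLapInv n f) j) ^ 2) ≤
      (1 / 4) * Real.sqrt (∑ j, (f j) ^ 2) :=
  stmt8_general n f
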